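/- arXiv:1508.01260 — 7 statements merged into one kernel-verified Lean document; each statement's English description precedes it below -/
import Mathlib

section
/- If (T₁, T₂) is the compression of a pair of doubly commuting isometries (V₁, V₂) to a common co-invariant subspace, then the operator 1 - T₁T₁* - T₂T₂* + T₁T₂T₁*T₂* is positive. -/
/-! Put `Pⱼ = 1 - VⱼVⱼ*`, the projection onto `ker Vⱼ*`. Since `V₁*V₂ = V₂V₁*`, the operator
`1 - V₁V₁* - V₂V₂* + V₁V₂V₁*V₂*` on `H` factors as `P₁P₂`, and `P₁`, `P₂` commute, so it is an
orthogonal projection, hence positive. Co-invariance of `M` makes compression to `M`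
multiplicative on the products that occur (`P_M S P_M R = P_M S R` on `M` as soon as `S*M ⊆ M`
or `RM ⊆ M`), and compression commutes with adjoints, so `1 - T₁T₁* - T₂T₂* + T₁T₂T₁*T₂*` is
the compression of `P₁P₂` to `M`, which is positive. -/

open ContinuousLinearMap

section StarMonoid

variable {R : Type*} [Monoid R] [StarMul R] {a b : R}

theorem IsStarProjection.mul_star_self_of_star_mul_self (ha : star a * a = 1) :
    IsStarProjection (a * star a) where
  isSelfAdjoint := .mul_star_self a
  isIdempotentElem := by rw [IsIdempotentElem, mul_assoc, ← mul_assoc (star a), ha, one_mul]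

theorem Commute.mul_star_self_of_commute_star (hab : Commute a b) (hab' : Commute (star a) b) :
    Commute (a * star a) (b * star b) := by
  have hab_star : Commute a (star b) := by simpa using hab'.star_star
  calc a * star a * (b * star b) = a * b * (star a * star b) := by
        rw [mul_assoc, ← mul_assoc (star a), hab'.eq, mul_assoc, mul_assoc]
    _ = b * a * (star b * star a) := by rw [hab.eq, hab.star_star.eq]
    _ = b * (a * star b) * star a := by simp only [mul_assoc]
    _ = b * (star b * a) * star a := by rw [hab_star.eq]
    _ = b * star b * (a * star a) := by simp only [mul_assoc]

end StarMonoid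

section StarRing

variable {R : Type*} [Ring R] [StarRing R] {a b : R}

theorem one_sub_mul_star_mul_one_sub_mul_star (hab' : Commute (star a) b) :
    (1 - a * star a) * (1 - b * star b) =
      1 - a * star a - b * star b + a * b * star a * star b := by
  have : a * star a * (b * star b) = a * b * star a * star b := by
    rw [mul_assoc, ← mul_assoc (star a), hab'.eq, ← mul_assoc, ← mul_assoc]
  simp only [sub_mul, mul_sub, one_mul, mul_one, this]
  abel

theorem isStarProjection_one_sub_sub_add_of_doubly_commuting (ha : star a * a = 1)
    (hb : star b * b = 1) (hab : Commute a b) (hab' : Commute (star a) b) :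
    IsStarProjection (1 - a * star a - b * star b + a * b * star a * star b) := by
  rw [← one_sub_mul_star_mul_one_sub_mul_star hab']
  have hcomm := hab.mul_star_self_of_commute_star hab'
  exact (IsStarProjection.mul_star_self_of_star_mul_self ha).one_sub.mul
    (IsStarProjection.mul_star_self_of_star_mul_self hb).one_sub
    ((Commute.one_right _).sub_right ((Commute.one_left _).sub_left hcomm))

end StarRing

namespace Submodule

variable {𝕜 E : Type*} [RCLike 𝕜] [NormedAddCommGroup E] [InnerProductSpace 𝕜 E]

noncomputable def compression (K : Submodule 𝕜 E) [K.HasOrthogonalProjection] (S : E →L[𝕜] E) :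
    K →L[𝕜] K :=
  K.orthogonalProjectionOnto ∘L S ∘L K.subtypeL

section

variable (K : Submodule 𝕜 E) [K.HasOrthogonalProjection]

@[simp]
theorem compression_apply (S : E →L[𝕜] E) (x : K) :
    K.compression S x = K.orthogonalProjectionOnto (S x) := rfl

@[simp]
theorem compression_one : K.compression 1 = 1 := by
  ext x; simp

theorem compression_add (S R : E →L[𝕜] E) :
    K.compression (S + R) = K.compression S + K.compression R := by
  simp only [compression, add_comp, comp_add]

theorem compression_sub (S R : E →L[𝕜] E) :
    K.compression (S - R) = K.compression S - K.compression R := by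
  simp only [compression, sub_comp, comp_sub]

theorem compression_comp_of_mapsTo {R : E →L[𝕜] E} (hR : ∀ x ∈ K, R x ∈ K) (S : E →L[𝕜] E) :
    K.compression S ∘L K.compression R = K.compression (S ∘L R) := by
  ext x
  simp [starProjection_eq_self_iff.mpr (hR x x.2)]

end

variable [CompleteSpace E] (K : Submodule 𝕜 E) [CompleteSpace K]

theorem adjoint_compression (S : E →L[𝕜] E) :
    adjoint (K.compression S) = K.compression (adjoint S) := by
  simp only [compression, adjoint_comp, adjoint_subtypeL, adjoint_orthogonalProjectionOnto,
    comp_assoc]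

theorem compression_comp_of_adjoint_mapsTo {S : E →L[𝕜] E} (hS : ∀ x ∈ K, adjoint S x ∈ K)
    (R : E →L[𝕜] E) : K.compression S ∘L K.compression R = K.compression (S ∘L R) := by
  apply adjoint.injective
  rw [adjoint_comp, adjoint_compression, adjoint_compression, compression_comp_of_mapsTo K hS,
    ← adjoint_comp, adjoint_compression]

end Submodule

/-- If `(T₁, T₂)` is the compression of a pair of doubly commuting
isometries `(V₁, V₂)` to a common co-invariant (closed) subspace `M`, then
`1 - T₁T₁* - T₂T₂* + T₁T₂T₁*T₂*` is a positive operator. -/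
theorem compression_of_doubly_commuting_isometries_defect_positive
    {H : Type*} [NormedAddCommGroup H] [InnerProductSpace ℂ H] [CompleteSpace H]
    (V₁ V₂ : H →L[ℂ] H)
    (hV₁ : ∀ x, ‖V₁ x‖ = ‖x‖) (hV₂ : ∀ x, ‖V₂ x‖ = ‖x‖)
    (hcomm : V₁ ∘L V₂ = V₂ ∘L V₁)
    (hdcomm : adjoint V₁ ∘L V₂ = V₂ ∘L adjoint V₁)
    (M : Submodule ℂ H) [CompleteSpace M]
    (hco₁ : ∀ x ∈ M, adjoint V₁ x ∈ M) (hco₂ : ∀ x ∈ M, adjoint V₂ x ∈ M)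
    (T₁ T₂ : M →L[ℂ] M)
    (hT₁ : ∀ x : M, T₁ x = M.orthogonalProjectionOnto (V₁ x))
    (hT₂ : ∀ x : M, T₂ x = M.orthogonalProjectionOnto (V₂ x)) :
    (1 - T₁ ∘L adjoint T₁ - T₂ ∘L adjoint T₂
        + T₁ ∘L T₂ ∘L adjoint T₁ ∘L adjoint T₂).IsPositive := by
  have hdefect : (1 - V₁ ∘L adjoint V₁ - V₂ ∘L adjoint V₂
      + V₁ ∘L V₂ ∘L adjoint V₁ ∘L adjoint V₂).IsPositive :=
    .of_isStarProjection <| isStarProjection_one_sub_sub_add_of_doubly_commuting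
      ((norm_map_iff_adjoint_comp_self V₁).mp hV₁) ((norm_map_iff_adjoint_comp_self V₂).mp hV₂)
      hcomm hdcomm
  obtain rfl : T₁ = M.compression V₁ := ext hT₁
  obtain rfl : T₂ = M.compression V₂ := ext hT₂
  rw [M.adjoint_compression, M.adjoint_compression,
    M.compression_comp_of_mapsTo hco₂ (adjoint V₁), M.compression_comp_of_adjoint_mapsTo hco₁,
    M.compression_comp_of_adjoint_mapsTo hco₂, M.compression_comp_of_adjoint_mapsTo hco₂,
    M.compression_comp_of_adjoint_mapsTo hco₁,
    ← M.compression_one, ← M.compression_sub, ← M.compression_sub, ← M.compression_add]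
  exact hdefect.orthogonalProjectionOnto_comp M
end

section
/- Let H have orthonormal basis (e_I)_{I ∈ ℕ²} and let (T₁, T₂) be the 2-variable weighted shift with weights w_{I,j} = 1/2 if I = (0,0) and w_{I,j} = 1 otherwise. Then (1 - T₁T₁* - T₂T₂* + T₁T₂T₁*T₂*) e_{(1,1)} = -(3/4) e_{(1,1)}; in particular, 1 - T₁T₁* - T₂T₂* + T₁T₂T₁*T₂* is not a positive operator. -/
/-!
The adjoint of a weighted shift sends `e_{σ i}` to `conj (w i) • e_i`. Hence
`T₁* e(1,1) = e(0,1)`, `T₂* e(1,1) = e(1,0)` and `T₁* e(1,0) = ½ e(0,0)`, so the defect operator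
sends `e(1,1)` to `(1 - 1 - 1 + ¼) e(1,1)`. A positive operator cannot have the negative
eigenvalue `-¾`.
-/

open ContinuousLinearMap
open scoped InnerProductSpace ComplexConjugate

theorem ContinuousLinearMap.not_isPositive_of_apply_eq_smul {𝕜 E : Type*} [RCLike 𝕜]
    [NormedAddCommGroup E] [InnerProductSpace 𝕜 E] {T : E →L[𝕜] E} {x : E} (hx : x ≠ 0)
    {c : ℝ} (hc : c < 0) (hTx : T x = (c : 𝕜) • x) : ¬ T.IsPositive := by
  intro hT
  have hnonneg := hT.re_inner_nonneg_left x
  rw [hTx, inner_smul_left, RCLike.conj_ofReal, RCLike.re_ofReal_mul,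
    inner_self_eq_norm_sq] at hnonneg
  have hx' : 0 < ‖x‖ ^ 2 := by positivity
  nlinarith

section WeightedShift

variable {ι 𝕜 : Type*} [RCLike 𝕜] [DecidableEq ι]

theorem lp.inner_single_one_left (i : ι) (f : lp (fun _ : ι => 𝕜) 2) :
    ⟪lp.single 2 i (1 : 𝕜), f⟫_𝕜 = f i := by
  simp [lp.inner_single_left]

theorem adjoint_apply_single_of_apply_single
    {T : lp (fun _ : ι => 𝕜) 2 →L[𝕜] lp (fun _ : ι => 𝕜) 2} {w : ι → 𝕜} {σ : ι → ι}
    (hσ : σ.Injective) (hT : ∀ i, T (lp.single 2 i 1) = w i • lp.single 2 (σ i) 1) (i : ι) :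
    adjoint T (lp.single 2 (σ i) 1) = conj (w i) • lp.single 2 i 1 := by
  refine lp.ext (funext fun j => ?_)
  rw [← lp.inner_single_one_left, adjoint_inner_right, hT, inner_smul_left,
    lp.inner_single_one_left, lp.coeFn_smul, Pi.smul_apply, smul_eq_mul]
  rcases eq_or_ne j i with rfl | hji
  · simp
  · rw [lp.single_apply_ne _ _ _ hji, lp.single_apply_ne _ _ _ (hσ.ne hji), mul_zero, mul_zero]

end WeightedShift

/-- For the 2-variable weighted shift `(T₁, T₂)` on `ℓ²(ℕ²)` with weights
`w_{I,j} = 1/2` for `I = (0,0)` and `w_{I,j} = 1` otherwise, one has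
`(1 - T₁T₁* - T₂T₂* + T₁T₂T₁*T₂*) e_{(1,1)} = -(3/4) e_{(1,1)}`; in particular this
operator is not positive. -/
theorem two_variable_weighted_shift_defect_not_positive
    (e : ℕ × ℕ → lp (fun _ : ℕ × ℕ => ℂ) 2)
    (he : ∀ I, e I = lp.single 2 I (1 : ℂ))
    (T₁ T₂ : lp (fun _ : ℕ × ℕ => ℂ) 2 →L[ℂ] lp (fun _ : ℕ × ℕ => ℂ) 2)
    (hT₁ : ∀ I : ℕ × ℕ,
      T₁ (e I) = (if I = (0, 0) then (1 / 2 : ℂ) else 1) • e (I.1 + 1, I.2))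
    (hT₂ : ∀ I : ℕ × ℕ,
      T₂ (e I) = (if I = (0, 0) then (1 / 2 : ℂ) else 1) • e (I.1, I.2 + 1)) :
    (1 - T₁ ∘L adjoint T₁ - T₂ ∘L adjoint T₂
        + T₁ ∘L T₂ ∘L adjoint T₁ ∘L adjoint T₂) (e (1, 1))
      = (-(3 / 4) : ℂ) • e (1, 1) ∧
    ¬ (1 - T₁ ∘L adjoint T₁ - T₂ ∘L adjoint T₂
        + T₁ ∘L T₂ ∘L adjoint T₁ ∘L adjoint T₂).IsPositive := by
  simp only [he] at hT₁ hT₂ ⊢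
  have hT₁adj := adjoint_apply_single_of_apply_single (σ := fun I => (I.1 + 1, I.2))
    (fun I J h => by simpa [Prod.ext_iff] using h) hT₁
  have hT₂adj := adjoint_apply_single_of_apply_single (σ := fun I => (I.1, I.2 + 1))
    (fun I J h => by simpa [Prod.ext_iff] using h) hT₂
  have a₁ : adjoint T₁ (lp.single 2 (1, 1) 1) = lp.single 2 (0, 1) 1 := by
    simpa using hT₁adj (0, 1)
  have a₂ : adjoint T₂ (lp.single 2 (1, 1) 1) = lp.single 2 (1, 0) 1 := by
    simpa using hT₂adj (1, 0)
  have a₃ : adjoint T₁ (lp.single 2 (1, 0) 1) = (1 / 2 : ℂ) • lp.single 2 (0, 0) 1 := by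
    simpa [Complex.conj_ofNat] using hT₁adj (0, 0)
  have hD : (1 - T₁ ∘L adjoint T₁ - T₂ ∘L adjoint T₂
        + T₁ ∘L T₂ ∘L adjoint T₁ ∘L adjoint T₂) (lp.single 2 (1, 1) 1)
      = (-(3 / 4) : ℂ) • lp.single 2 (1, 1) 1 := by
    simp only [add_apply, sub_apply, one_apply_eq_self, comp_apply, a₁, a₂, a₃, map_smul, hT₁, hT₂]
    norm_num [smul_smul]
    module
  refine ⟨hD, not_isPositive_of_apply_eq_smul (x := lp.single 2 (1, 1) 1) (c := -(3 / 4))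
    ?_ (by norm_num) (by rw [hD]; push_cast; rfl)⟩
  rw [← norm_ne_zero_iff, lp.norm_single (by norm_num)]
  simp
end

section
/- Suppose (w_{I,j}) is a family of nonzero complex numbers indexed by multi-indices I ∈ ℕ^d with |I| ≤ N and j ∈ {1,…,d}, satisfying the commutation relations w_{I,j} w_{I+εⱼ,k} = w_{I,k} w_{I+ε_k,j} for |I| ≤ N-1. Then there exists a family (λ_I)_{|I| ≤ N+1} of unimodular complex numbers with λ_{(0,…,0)} = 1 and λ_{I+εⱼ} = λ_I w_{I,j}/|w_{I,j}| for all |I| ≤ N and all j (i.e., the recursive definition is consistent). -/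
/-!
The normalized weights `u_{I,j} = w_{I,j} / |w_{I,j}|` are unimodular and, since `z ↦ z / |z|` is
multiplicative, still satisfy the commutation relations. Take `λ_I` to be the product of `u` along
a fixed monotone lattice path from `0` to `I`. The commutation relation says exactly that swapping
two consecutive steps of a path does not change its product, so any two monotone paths with the
same endpoint (the step sequences are permutations of each other) have the same product; comparing
a path to `I + εⱼ` with a path to `I` followed by the step `j` gives the recursion.
-/

section CanonicalPath

variable {ι : Type*}

noncomputable def canonicalPath [Finite ι] (I : ι → ℕ) : List ι :=
  (Finsupp.equivFunOnFinite.symm I).toMultiset.toList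

theorem count_canonicalPath [Finite ι] [DecidableEq ι] (I : ι → ℕ) (i : ι) :
    (canonicalPath I).count i = I i := by
  rw [canonicalPath, ← Multiset.coe_count, Multiset.coe_toList, Finsupp.count_toMultiset]
  rfl

theorem length_canonicalPath [Fintype ι] (I : ι → ℕ) : (canonicalPath I).length = ∑ i, I i := by
  rw [canonicalPath, Multiset.length_toList, Finsupp.card_toMultiset, Finsupp.sum_fintype] <;> simp

theorem canonicalPath_zero [Fintype ι] : canonicalPath (0 : ι → ℕ) = [] := by
  rw [← List.length_eq_zero_iff, length_canonicalPath]
  simp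

theorem canonicalPath_add_single_perm [Finite ι] [DecidableEq ι] (I : ι → ℕ) (j : ι) :
    (canonicalPath (I + Pi.single j 1)).Perm (canonicalPath I ++ [j]) :=
  List.perm_iff_count.mpr fun i => by
    simp only [count_canonicalPath, List.count_append, Pi.add_apply, Pi.single_apply,
      List.count_singleton, beq_iff_eq, eq_comm (a := j)]

theorem sum_add_single [Fintype ι] [DecidableEq ι] (I : ι → ℕ) (j : ι) :
    ∑ i, (I + Pi.single j 1 : ι → ℕ) i = ∑ i, I i + 1 := by
  simp [Finset.sum_add_distrib]

end CanonicalPath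

section PathProd

variable {ι M : Type*} [DecidableEq ι] [CommMonoid M]

def pathProd (u : (ι → ℕ) → ι → M) : (ι → ℕ) → List ι → M
  | _, [] => 1
  | I, j :: l => u I j * pathProd u (I + Pi.single j 1) l

theorem pathProd_append (u : (ι → ℕ) → ι → M) (I : ι → ℕ) (l m : List ι) :
    pathProd u I (l ++ m) = pathProd u I l * pathProd u (I + fun i => l.count i) m := by
  induction l generalizing I with
  | nil => simp only [List.nil_append, pathProd, one_mul, List.count_nil, ← Pi.zero_def, add_zero]
  | cons a l ih =>
    have hI : I + Pi.single a 1 + (fun i => l.count i) = I + fun i => (a :: l).count i := by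
      funext i
      simp only [Pi.add_apply, List.count_cons, Pi.single_apply, beq_iff_eq, eq_comm (a := i)]
      omega
    simp only [List.cons_append, pathProd, ih, hI, mul_assoc]

variable [Fintype ι] {u : (ι → ℕ) → ι → M} {N : ℕ}

theorem pathProd_perm
    (hu : ∀ (I : ι → ℕ) (j k : ι), ∑ i, I i + 1 ≤ N →
      u I j * u (I + Pi.single j 1) k = u I k * u (I + Pi.single k 1) j)
    {l₁ l₂ : List ι} (h : l₁.Perm l₂) (I : ι → ℕ) (hI : ∑ i, I i + l₁.length ≤ N + 1) :
    pathProd u I l₁ = pathProd u I l₂ := by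
  induction h generalizing I with
  | nil => rfl
  | cons a _ ih =>
    simp only [List.length_cons] at hI
    simp only [pathProd, ih (I + Pi.single a 1) (by rw [sum_add_single]; omega)]
  | swap j k l =>
    simp only [List.length_cons] at hI
    have hIkj : I + Pi.single k 1 + Pi.single j 1 = I + Pi.single j 1 + Pi.single k 1 := by
      abel
    simp only [pathProd, ← mul_assoc, hu I k j (by omega), hIkj]
  | trans h₁₂ _ ih₁ ih₂ =>
    exact (ih₁ I hI).trans (ih₂ I (h₁₂.length_eq ▸ hI))

theorem pathProd_mem {S : Submonoid M} (hu : ∀ J : ι → ℕ, ∑ i, J i ≤ N → ∀ j, u J j ∈ S)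
    (I : ι → ℕ) (l : List ι) (hI : ∑ i, I i + l.length ≤ N + 1) : pathProd u I l ∈ S := by
  induction l generalizing I with
  | nil => exact S.one_mem
  | cons j l ih =>
    simp only [List.length_cons] at hI
    exact S.mul_mem (hu I (by omega) j) (ih _ (by rw [sum_add_single]; omega))

theorem pathProd_canonicalPath_add_single
    (hu : ∀ (I : ι → ℕ) (j k : ι), ∑ i, I i + 1 ≤ N →
      u I j * u (I + Pi.single j 1) k = u I k * u (I + Pi.single k 1) j)
    (I : ι → ℕ) (j : ι) (hI : ∑ i, I i ≤ N) :
    pathProd u 0 (canonicalPath (I + Pi.single j 1)) = pathProd u 0 (canonicalPath I) * u I j := by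
  have hlen : ∑ i, (0 : ι → ℕ) i + (canonicalPath (I + Pi.single j 1)).length ≤ N + 1 := by
    rw [length_canonicalPath, sum_add_single]
    simpa using hI
  have hend : (0 + fun i => (canonicalPath I).count i) = I := by
    funext i
    simp [count_canonicalPath]
  rw [pathProd_perm hu (canonicalPath_add_single_perm I j) 0 hlen, pathProd_append, hend,
    pathProd, pathProd, mul_one]

end PathProd

theorem Complex.div_norm_mul_div_norm (z w : ℂ) :
    z / (‖z‖ : ℂ) * (w / (‖w‖ : ℂ)) = z * w / (‖z * w‖ : ℂ) := by
  rw [div_mul_div_comm, norm_mul, Complex.ofReal_mul]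

theorem Complex.norm_div_norm {z : ℂ} (hz : z ≠ 0) : ‖z / (‖z‖ : ℂ)‖ = 1 := by
  rw [norm_div, Complex.norm_real, norm_norm, div_self (norm_ne_zero_iff.mpr hz)]

/-- Given nonzero complex weights `w_{I,j}` for multi-indices `I ∈ ℕ^d`
with `|I| ≤ N` satisfying the commutation relations
`w_{I,j} w_{I+εⱼ,k} = w_{I,k} w_{I+ε_k,j}` for `|I| ≤ N - 1`, there is a consistent family
of unimodular constants `λ_I` for `|I| ≤ N + 1` with `λ_0 = 1` and
`λ_{I+εⱼ} = λ_I · w_{I,j}/|w_{I,j}|`. -/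
theorem unimodular_family_consistent
    (d N : ℕ) (w : (Fin d → ℕ) → Fin d → ℂ)
    (hw : ∀ I : Fin d → ℕ, (∑ i, I i) ≤ N → ∀ j, w I j ≠ 0)
    (hcomm : ∀ (I : Fin d → ℕ) (j k : Fin d), (∑ i, I i) + 1 ≤ N →
      w I j * w (I + Pi.single j 1) k = w I k * w (I + Pi.single k 1) j) :
    ∃ lam : (Fin d → ℕ) → ℂ,
      (∀ I : Fin d → ℕ, (∑ i, I i) ≤ N + 1 → ‖lam I‖ = 1) ∧
      lam 0 = 1 ∧
      ∀ (I : Fin d → ℕ) (j : Fin d), (∑ i, I i) ≤ N →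
        lam (I + Pi.single j 1) = lam I * (w I j / ((‖w I j‖ : ℝ) : ℂ)) := by
  set u : (Fin d → ℕ) → Fin d → ℂ := fun I j => w I j / ((‖w I j‖ : ℝ) : ℂ)
  have hu_comm : ∀ (I : Fin d → ℕ) (j k : Fin d), ∑ i, I i + 1 ≤ N →
      u I j * u (I + Pi.single j 1) k = u I k * u (I + Pi.single k 1) j := fun I j k hI => by
    simp only [u, Complex.div_norm_mul_div_norm, hcomm I j k hI]
  have hu_unit : ∀ J : Fin d → ℕ, ∑ i, J i ≤ N → ∀ j, u J j ∈ Submonoid.unitSphere ℂ :=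
    fun J hJ j => mem_sphere_zero_iff_norm.mpr (Complex.norm_div_norm (hw J hJ j))
  refine ⟨fun I => pathProd u 0 (canonicalPath I), fun I hI => ?_, ?_,
    fun I j hI => pathProd_canonicalPath_add_single hu_comm I j hI⟩
  · exact mem_sphere_zero_iff_norm.mp
      (pathProd_mem hu_unit 0 _ (by simpa [length_canonicalPath] using hI))
  · simp only [canonicalPath_zero, pathProd]
end

section
/- Consider the 3×3 complex matrix polynomial p(z₁,z₂,z₃) = [[z₁, z₂, 0], [z₃, 0, z₂], [0, z₃, -z₁]]. Then sup{ ‖p(z₁,z₂,z₃)‖ : z₁, z₂, z₃ ∈ closed unit disc } = √3, where ‖·‖ denotes the operator norm on ℂ³. -/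
/-!
Adjoining the row `(conj z₂, -conj z₁, -conj z₃)` to `p(z)` gives a `4 × 3` matrix whose columns
are pairwise orthogonal, each of squared norm `|z₁|² + |z₂|² + |z₃|²`. Hence
`‖p(z) v‖² ≤ (|z₁|² + |z₂|² + |z₃|²) ‖v‖² ≤ 3 ‖v‖²` on the polydisc, with equality for
`z = (1, 1, 1)` and `v = (1, 1, 0)`, which the extra row annihilates.
-/

open ComplexConjugate

def parrottMatrix (z₁ z₂ z₃ : ℂ) : Matrix (Fin 3) (Fin 3) ℂ :=
  !![z₁, z₂, 0; z₃, 0, z₂; 0, z₃, -z₁]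

theorem toEuclideanCLM_parrottMatrix_apply (z₁ z₂ z₃ : ℂ) (v : EuclideanSpace ℂ (Fin 3)) :
    Matrix.toEuclideanCLM (𝕜 := ℂ) (parrottMatrix z₁ z₂ z₃) v
      = !₂[z₁ * v 0 + z₂ * v 1, z₃ * v 0 + z₂ * v 2, z₃ * v 1 - z₁ * v 2] := by
  ext i
  rw [Matrix.ofLp_toEuclideanCLM]
  fin_cases i <;>
    simp [parrottMatrix, Matrix.mulVec, dotProduct, Fin.sum_univ_three, sub_eq_add_neg]

theorem sum_norm_sq_parrott_rows (z₁ z₂ z₃ x y z : ℂ) :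
    ‖z₁ * x + z₂ * y‖ ^ 2 + ‖z₃ * x + z₂ * z‖ ^ 2 + ‖z₃ * y - z₁ * z‖ ^ 2
        + ‖conj z₂ * x - conj z₁ * y - conj z₃ * z‖ ^ 2
      = (‖z₁‖ ^ 2 + ‖z₂‖ ^ 2 + ‖z₃‖ ^ 2) * (‖x‖ ^ 2 + ‖y‖ ^ 2 + ‖z‖ ^ 2) := by
  simp only [Complex.sq_norm, Complex.normSq_apply, Complex.mul_re, Complex.mul_im,
    Complex.add_re, Complex.add_im, Complex.sub_re, Complex.sub_im, Complex.conj_re,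
    Complex.conj_im]
  ring

theorem norm_sq_toEuclideanCLM_parrottMatrix_add (z₁ z₂ z₃ : ℂ) (v : EuclideanSpace ℂ (Fin 3)) :
    ‖Matrix.toEuclideanCLM (𝕜 := ℂ) (parrottMatrix z₁ z₂ z₃) v‖ ^ 2
        + ‖conj z₂ * v 0 - conj z₁ * v 1 - conj z₃ * v 2‖ ^ 2
      = (‖z₁‖ ^ 2 + ‖z₂‖ ^ 2 + ‖z₃‖ ^ 2) * ‖v‖ ^ 2 := by
  simp only [toEuclideanCLM_parrottMatrix_apply, EuclideanSpace.norm_sq_eq, Fin.sum_univ_three]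
  simpa using sum_norm_sq_parrott_rows z₁ z₂ z₃ (v 0) (v 1) (v 2)

theorem norm_toEuclideanCLM_parrottMatrix_le (z₁ z₂ z₃ : ℂ) :
    ‖Matrix.toEuclideanCLM (𝕜 := ℂ) (parrottMatrix z₁ z₂ z₃)‖
      ≤ √(‖z₁‖ ^ 2 + ‖z₂‖ ^ 2 + ‖z₃‖ ^ 2) := by
  refine ContinuousLinearMap.opNorm_le_bound _ (Real.sqrt_nonneg _) fun v ↦ ?_
  rw [← Real.sqrt_sq (norm_nonneg v), ← Real.sqrt_mul (by positivity)]
  refine Real.le_sqrt_of_sq_le ?_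
  rw [← norm_sq_toEuclideanCLM_parrottMatrix_add]
  exact le_add_of_nonneg_right (sq_nonneg _)

theorem norm_toEuclideanCLM_parrottMatrix_le_sqrt_three {z₁ z₂ z₃ : ℂ}
    (h₁ : ‖z₁‖ ≤ 1) (h₂ : ‖z₂‖ ≤ 1) (h₃ : ‖z₃‖ ≤ 1) :
    ‖Matrix.toEuclideanCLM (𝕜 := ℂ) (parrottMatrix z₁ z₂ z₃)‖ ≤ √3 := by
  refine (norm_toEuclideanCLM_parrottMatrix_le z₁ z₂ z₃).trans (Real.sqrt_le_sqrt ?_)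
  have := pow_le_one₀ (n := 2) (norm_nonneg z₁) h₁
  have := pow_le_one₀ (n := 2) (norm_nonneg z₂) h₂
  have := pow_le_one₀ (n := 2) (norm_nonneg z₃) h₃
  linarith

theorem norm_toEuclideanCLM_parrottMatrix_one :
    ‖Matrix.toEuclideanCLM (𝕜 := ℂ) (parrottMatrix 1 1 1)‖ = √3 := by
  refine le_antisymm
    (norm_toEuclideanCLM_parrottMatrix_le_sqrt_three (by simp) (by simp) (by simp)) ?_
  set v : EuclideanSpace ℂ (Fin 3) := !₂[1, 1, 0]
  have hv : 0 < ‖v‖ := norm_pos_iff.2 fun h ↦ by simpa [v] using congr($h 0)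
  have hTv : ‖Matrix.toEuclideanCLM (𝕜 := ℂ) (parrottMatrix 1 1 1) v‖ = √3 * ‖v‖ := by
    have hsq := norm_sq_toEuclideanCLM_parrottMatrix_add 1 1 1 v
    have hcompl : conj 1 * v 0 - conj 1 * v 1 - conj 1 * v 2 = 0 := by simp [v]
    rw [hcompl] at hsq
    norm_num at hsq
    rw [← Real.sqrt_sq (norm_nonneg _), hsq, Real.sqrt_mul zero_le_three,
      Real.sqrt_sq (norm_nonneg v)]
  refine le_of_mul_le_mul_right ?_ hv
  exact hTv ▸ ContinuousLinearMap.le_opNorm _ v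

/-- For the matrix polynomial
`p(z₁,z₂,z₃) = [[z₁, z₂, 0], [z₃, 0, z₂], [0, z₃, -z₁]]`, the supremum of the operator
norm `‖p(z₁,z₂,z₃)‖` over the closed unit polydisc equals `√3`. -/
theorem parrott_polynomial_sup_on_polydisc :
    sSup {x : ℝ | ∃ z₁ z₂ z₃ : ℂ,
        ‖z₁‖ ≤ 1 ∧ ‖z₂‖ ≤ 1 ∧ ‖z₃‖ ≤ 1 ∧
        x = ‖Matrix.toEuclideanCLM (𝕜 := ℂ)
              !![z₁, z₂, 0; z₃, 0, z₂; 0, z₃, -z₁]‖}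
      = Real.sqrt 3 := by
  refine IsGreatest.csSup_eq ⟨⟨1, 1, 1, by simp, by simp, by simp, ?_⟩, ?_⟩
  · exact norm_toEuclideanCLM_parrottMatrix_one.symm
  · rintro x ⟨z₁, z₂, z₃, h₁, h₂, h₃, rfl⟩
    exact norm_toEuclideanCLM_parrottMatrix_le_sqrt_three h₁ h₂ h₃
end

section
/- With A₁ = [[0,-1,0],[0,0,1],[0,0,0]], A₂ = [[1,0,0],[0,0,0],[0,0,1]], A₃ = [[0,0,0],[1,0,0],[0,1,0]], Tⱼ = [[0,0],[Aⱼ,0]] ∈ M₆(ℂ), and p(z₁,z₂,z₃) = [[z₁,z₂,0],[z₃,0,z₂],[0,z₃,-z₁]], we have ‖p(T₁,T₂,T₃)‖ ≥ 2 > √3 = sup_{z ∈ closed polydisc} ‖p(z)‖. Hence (T₁,T₂,T₃) fails the matrix-valued von Neumann inequality. -/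
/-! On the torus `p(z)ᴴ p(z) = 2 + N`, where `N` is Hermitian with zero diagonal, unimodular
entries and `det N = -2`; its eigenvalues are `1, 1, -2`, so `‖p(z)‖ = √3`. On the whole
polydisc `3‖v‖² - ‖p(z) v‖²` is still a nonnegative combination of squares. The operator
`p(T)`, by contrast, doubles the norm of a suitable vector. -/

noncomputable def parrottA : Fin 3 → Matrix (Fin 3) (Fin 3) ℂ :=
  ![!![0, -1, 0; 0, 0, 1; 0, 0, 0],
    !![1, 0, 0; 0, 0, 0; 0, 0, 1],
    !![0, 0, 0; 1, 0, 0; 0, 1, 0]]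

noncomputable def parrottT : Fin 3 → Matrix (Fin 3 ⊕ Fin 3) (Fin 3 ⊕ Fin 3) ℂ :=
  fun j => Matrix.fromBlocks 0 0 (parrottA j) 0

/-- The 3×3 block matrix `p(T₁,T₂,T₃)` obtained by substituting `T₁, T₂, T₃` into
`p(z₁,z₂,z₃) = [[z₁,z₂,0],[z₃,0,z₂],[0,z₃,-z₁]]`, acting on `(ℂ⁶)³ ≅ ℂ¹⁸`. -/
noncomputable def parrottPT :
    Matrix (Fin 3 × (Fin 3 ⊕ Fin 3)) (Fin 3 × (Fin 3 ⊕ Fin 3)) ℂ :=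
  Matrix.of fun x y =>
    (![![parrottT 0, parrottT 1, 0],
       ![parrottT 2, 0, parrottT 1],
       ![0, parrottT 2, -parrottT 0]] x.1 y.1) x.2 y.2

open Matrix Complex ComplexConjugate

namespace Matrix

variable {𝕜 n : Type*} [RCLike 𝕜] [Fintype n] [DecidableEq n]

theorem norm_toEuclideanCLM_le_of_sum_sq_le {M : Matrix n n 𝕜} {C : ℝ} (hC : 0 ≤ C)
    (h : ∀ v : n → 𝕜, ∑ i, ‖(M *ᵥ v) i‖ ^ 2 ≤ C ^ 2 * ∑ i, ‖v i‖ ^ 2) :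
    ‖toEuclideanCLM (𝕜 := 𝕜) M‖ ≤ C := by
  refine ContinuousLinearMap.opNorm_le_bound _ hC fun x => ?_
  rw [← pow_le_pow_iff_left₀ (norm_nonneg _) (by positivity) two_ne_zero, mul_pow,
    EuclideanSpace.norm_sq_eq, EuclideanSpace.norm_sq_eq]
  exact h x.ofLp

theorem le_norm_toEuclideanCLM_of_le_sum_sq {M : Matrix n n 𝕜} {C : ℝ} {v : n → 𝕜}
    (hv : v ≠ 0) (h : C ^ 2 * ∑ i, ‖v i‖ ^ 2 ≤ ∑ i, ‖(M *ᵥ v) i‖ ^ 2) :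
    C ≤ ‖toEuclideanCLM (𝕜 := 𝕜) M‖ := by
  set x : EuclideanSpace 𝕜 n := WithLp.toLp 2 v
  have hx : 0 < ‖x‖ := norm_pos_iff.2 (by simpa [x] using hv)
  have hsq : (C * ‖x‖) ^ 2 ≤ (‖toEuclideanCLM (𝕜 := 𝕜) M‖ * ‖x‖) ^ 2 :=
    calc (C * ‖x‖) ^ 2 ≤ ‖toEuclideanCLM (𝕜 := 𝕜) M x‖ ^ 2 := by
          rwa [mul_pow, EuclideanSpace.norm_sq_eq, EuclideanSpace.norm_sq_eq]
      _ ≤ (‖toEuclideanCLM (𝕜 := 𝕜) M‖ * ‖x‖) ^ 2 := by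
          gcongr; exact ContinuousLinearMap.le_opNorm _ _
  have := (le_abs_self _).trans (abs_le_of_sq_le_sq hsq (by positivity))
  exact le_of_mul_le_mul_right this hx

end Matrix

/- For unimodular `zᵢ` the last term on the left vanishes, every coefficient on the right is 3,
and `3 - p(z)ᴴ p(z)` is the rank-one form `|a - z̄₁z₂ b - z̄₃z₂ c|²`. -/
theorem parrott_normSq_sum_add_eq (z₁ z₂ z₃ a b c : ℂ) :
    normSq (z₁ * a + z₂ * b) + normSq (z₃ * a + z₂ * c) + normSq (z₃ * b - z₁ * c)
        + normSq (a - conj z₁ * z₂ * b - conj z₃ * z₂ * c)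
        + (1 - normSq z₂) * normSq (z₃ * b + z₁ * c)
      = (1 + normSq z₁ + normSq z₃) * normSq a
        + (normSq z₂ + 2 * normSq z₃ + normSq z₁ * normSq z₂ - normSq z₂ * normSq z₃) * normSq b
        + (2 * normSq z₁ + normSq z₂ + normSq z₂ * normSq z₃ - normSq z₁ * normSq z₂)
          * normSq c := by
  simp only [normSq_apply, add_re, add_im, sub_re, sub_im, mul_re, mul_im, conj_re, conj_im]
  ring

theorem parrott_normSq_sum_le (z₁ z₂ z₃ a b c : ℂ)
    (h₁ : normSq z₁ ≤ 1) (h₂ : normSq z₂ ≤ 1) (h₃ : normSq z₃ ≤ 1) :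
    normSq (z₁ * a + z₂ * b) + normSq (z₃ * a + z₂ * c) + normSq (z₃ * b - z₁ * c)
      ≤ 3 * (normSq a + normSq b + normSq c) := by
  have hr₁ := normSq_nonneg z₁
  have hr₂ := normSq_nonneg z₂
  have hr₃ := normSq_nonneg z₃
  have ha : 1 + normSq z₁ + normSq z₃ ≤ 3 := by linarith
  have hb : normSq z₂ + 2 * normSq z₃ + normSq z₁ * normSq z₂ - normSq z₂ * normSq z₃ ≤ 3 := by
    nlinarith [mul_le_mul_of_nonneg_right h₁ hr₂,
      mul_le_mul_of_nonneg_right h₃ (by linarith : 0 ≤ 2 - normSq z₂)]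
  have hc : 2 * normSq z₁ + normSq z₂ + normSq z₂ * normSq z₃ - normSq z₁ * normSq z₂ ≤ 3 := by
    nlinarith [mul_le_mul_of_nonneg_right h₃ hr₂,
      mul_le_mul_of_nonneg_right h₁ (by linarith : 0 ≤ 2 - normSq z₂)]
  have hid := parrott_normSq_sum_add_eq z₁ z₂ z₃ a b c
  nlinarith [normSq_nonneg (a - conj z₁ * z₂ * b - conj z₃ * z₂ * c),
    mul_nonneg (sub_nonneg.2 h₂) (normSq_nonneg (z₃ * b + z₁ * c)),
    mul_le_mul_of_nonneg_right ha (normSq_nonneg a),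
    mul_le_mul_of_nonneg_right hb (normSq_nonneg b),
    mul_le_mul_of_nonneg_right hc (normSq_nonneg c)]

theorem norm_toEuclideanCLM_parrott_le {z₁ z₂ z₃ : ℂ} (h₁ : ‖z₁‖ ≤ 1) (h₂ : ‖z₂‖ ≤ 1)
    (h₃ : ‖z₃‖ ≤ 1) :
    ‖toEuclideanCLM (𝕜 := ℂ) !![z₁, z₂, 0; z₃, 0, z₂; 0, z₃, -z₁]‖ ≤ √3 := by
  refine norm_toEuclideanCLM_le_of_sum_sq_le (Real.sqrt_nonneg 3) fun v => ?_
  have hsq {z : ℂ} (hz : ‖z‖ ≤ 1) : normSq z ≤ 1 := by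
    rw [← Complex.sq_norm]; exact pow_le_one₀ (norm_nonneg z) hz
  simpa [Fin.sum_univ_three, mulVec, dotProduct, Complex.sq_norm, ← sub_eq_add_neg]
    using parrott_normSq_sum_le z₁ z₂ z₃ (v 0) (v 1) (v 2) (hsq h₁) (hsq h₂) (hsq h₃)

theorem sqrt_three_le_norm_toEuclideanCLM_parrott_one :
    √3 ≤ ‖toEuclideanCLM (𝕜 := ℂ) !![(1 : ℂ), 1, 0; 1, 0, 1; 0, 1, -1]‖ := by
  refine le_norm_toEuclideanCLM_of_le_sum_sq (v := ![1, 1, 0]) (by simp) ?_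
  simp [Fin.sum_univ_three, mulVec, dotProduct]
  norm_num

theorem two_le_norm_toEuclideanCLM_parrottPT : 2 ≤ ‖toEuclideanCLM (𝕜 := ℂ) parrottPT‖ := by
  -- `p(T)` sends this vector, of squared norm 3, to `(-2e₀, 2e₂, -2e₁)` in the second summands.
  refine le_norm_toEuclideanCLM_of_le_sum_sq
    (v := fun x => ![Sum.elim ![0, 1, 0] 0, Sum.elim ![-1, 0, 0] 0, Sum.elim ![0, 0, 1] 0] x.1 x.2)
    (Function.ne_iff.2 ⟨(0, .inl 1), by simp⟩) ?_
  simp [parrottPT, parrottT, parrottA, mulVec, dotProduct, fromBlocks, Fintype.sum_prod_type,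
    Fintype.sum_sum_type, Fin.sum_univ_succ]
  norm_num

/-- `‖p(T₁,T₂,T₃)‖ ≥ 2 > √3 = sup_{z ∈ closed polydisc} ‖p(z)‖`, so the
commuting contractions `(T₁,T₂,T₃)` fail the matrix-valued von Neumann inequality. -/
theorem parrott_fails_matrix_von_neumann :
    2 ≤ ‖Matrix.toEuclideanCLM (𝕜 := ℂ) parrottPT‖ ∧
    sSup {x : ℝ | ∃ z₁ z₂ z₃ : ℂ,
        ‖z₁‖ ≤ 1 ∧ ‖z₂‖ ≤ 1 ∧ ‖z₃‖ ≤ 1 ∧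
        x = ‖Matrix.toEuclideanCLM (𝕜 := ℂ)
              !![z₁, z₂, 0; z₃, 0, z₂; 0, z₃, -z₁]‖}
      = Real.sqrt 3 ∧
    Real.sqrt 3 < 2 := by
  refine ⟨two_le_norm_toEuclideanCLM_parrottPT, IsGreatest.csSup_eq ⟨?_, ?_⟩, ?_⟩
  · refine ⟨1, 1, 1, norm_one.le, norm_one.le, norm_one.le, le_antisymm ?_ ?_⟩
    · exact sqrt_three_le_norm_toEuclideanCLM_parrott_one
    · exact norm_toEuclideanCLM_parrott_le norm_one.le norm_one.le norm_one.le
  · rintro x ⟨z₁, z₂, z₃, h₁, h₂, h₃, rfl⟩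
    exact norm_toEuclideanCLM_parrott_le h₁ h₂ h₃
  · rw [Real.sqrt_lt' two_pos]; norm_num
end

section
/- The commuting contractions T₁, T₂, T₃ ∈ M₆(ℂ) defined by Tⱼ = [[0,0],[Aⱼ,0]] with A₁ = [[0,-1,0],[0,0,1],[0,0,0]], A₂ = [[1,0,0],[0,0,0],[0,0,1]], A₃ = [[0,0,0],[1,0,0],[0,1,0]] do not dilate to a triple of commuting unitaries: there is no Hilbert space K ⊇ ℂ⁶ and commuting unitaries U₁, U₂, U₃ on K with p(T₁,T₂,T₃) = P_{ℂ⁶} p(U₁,U₂,U₃)|_{ℂ⁶} for all polynomials p ∈ ℂ[z₁,z₂,z₃]. -/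
/-- The operators `T₁, T₂, T₃` as continuous linear maps on Euclidean `ℂ⁶`. -/
noncomputable def parrottTclm :
    Fin 3 → (EuclideanSpace ℂ (Fin 3 ⊕ Fin 3) →L[ℂ] EuclideanSpace ℂ (Fin 3 ⊕ Fin 3)) :=
  fun j => Matrix.toEuclideanCLM (𝕜 := ℂ) (parrottT j)

open scoped InnerProductSpace

theorem List.prod_ofFn_pow_single {M : Type*} [Monoid M] :
    ∀ {n : ℕ} (f : Fin n → M) (i : Fin n),
      (List.ofFn fun j => f j ^ (Pi.single i 1 : Fin n → ℕ) j).prod = f i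
  | _ + 1, f, i => by
    cases i using Fin.cases with
    | zero => simp [List.ofFn_succ, Fin.succ_ne_zero]
    | succ i =>
      simpa [List.ofFn_succ, Pi.single_apply, (Fin.succ_ne_zero i).symm] using
        List.prod_ofFn_pow_single (fun j => f j.succ) i

section
variable {𝕜 E F : Type*} [RCLike 𝕜] [NormedAddCommGroup E] [InnerProductSpace 𝕜 E]
  [NormedAddCommGroup F] [InnerProductSpace 𝕜 F]

theorem eq_of_norm_le_of_inner_eq_norm_sq {u v : E} (hn : ‖u‖ ≤ ‖v‖)
    (hi : ⟪u, v⟫_𝕜 = (‖v‖ : 𝕜) ^ 2) : u = v := by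
  have hre : RCLike.re ⟪u, v⟫_𝕜 = ‖v‖ ^ 2 := by
    rw [hi]; norm_cast
  have hle : ‖u - v‖ ^ 2 ≤ 0 := by
    rw [@norm_sub_sq 𝕜, hre]
    nlinarith [norm_nonneg u]
  simpa [sub_eq_zero] using le_antisymm hle (sq_nonneg _)

theorem LinearIsometry.eq_apply_of_inner_eq_of_norm_le (J : E →ₗᵢ[𝕜] F) {w : F} {z : E}
    (hn : ‖w‖ ≤ ‖z‖) (hi : ∀ y, ⟪z, y⟫_𝕜 = ⟪w, J y⟫_𝕜) : w = J z :=
  eq_of_norm_le_of_inner_eq_norm_sq (by rwa [J.norm_map]) <| by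
    rw [← hi, J.norm_map, inner_self_eq_norm_sq_to_K]
end

theorem parrottTclm_single_inl {j i i' : Fin 3} {c : ℂ}
    (h : (parrottA j).col i = Pi.single i' c) :
    parrottTclm j (EuclideanSpace.single (Sum.inl i) 1) = EuclideanSpace.single (Sum.inr i') c := by
  ext (r | r)
  · simp [parrottTclm, parrottT]
  · simpa [parrottTclm, parrottT, Pi.single_apply] using congrFun h r

theorem eq_neg_of_parrott_relations {M : Type*} [AddCommGroup M] (u : Fin 3 → M →+ M)
    (hcomm : ∀ j k v, u j (u k v) = u k (u j v)) (e f : Fin 3 → M)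
    (h01 : u 0 (e 1) = -f 0) (h02 : u 0 (e 2) = f 1) (h10 : u 1 (e 0) = f 0)
    (h12 : u 1 (e 2) = f 2) (h20 : u 2 (e 0) = f 1) (h21 : u 2 (e 1) = f 2) :
    u 2 (f 0) = -u 2 (f 0) := by
  calc u 2 (f 0) = u 1 (f 1) := by rw [← h10, ← h20, hcomm]
    _ = u 0 (f 2) := by rw [← h02, ← h12, hcomm]
    _ = -u 2 (f 0) := by rw [← h21, hcomm, h01, map_neg]

/-- The commuting contractions `T₁, T₂, T₃` do not dilate to a triple of
commuting unitaries: there is no Hilbert space `K ⊇ ℂ⁶` (given by an isometric embedding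
`J`) and commuting unitaries `U₁, U₂, U₃` on `K` with
`p(T₁,T₂,T₃) = P_{ℂ⁶} p(U₁,U₂,U₃)|_{ℂ⁶}` for all polynomials `p`; equivalently (by
linearity) for all monomials `z₁^{m₁} z₂^{m₂} z₃^{m₃}`. -/
theorem parrott_no_unitary_dilation
    (K : Type*) [NormedAddCommGroup K] [InnerProductSpace ℂ K] [CompleteSpace K]
    (J : EuclideanSpace ℂ (Fin 3 ⊕ Fin 3) →ₗᵢ[ℂ] K)
    (U : Fin 3 → (K →L[ℂ] K))
    (hU : ∀ j, U j ∈ unitary (K →L[ℂ] K))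
    (hUcomm : ∀ j k, U j * U k = U k * U j)
    (hdil : ∀ (m : Fin 3 → ℕ) (x y : EuclideanSpace ℂ (Fin 3 ⊕ Fin 3)),
      (inner ℂ ((List.ofFn fun j => parrottTclm j ^ m j).prod x) y : ℂ)
        = inner ℂ ((List.ofFn fun j => U j ^ m j).prod (J x)) (J y)) :
    False := by
  set e : Fin 3 → K := fun i => J (EuclideanSpace.single (Sum.inl i) 1)
  set f : Fin 3 → K := fun i => J (EuclideanSpace.single (Sum.inr i) 1)
  have hcompress (j : Fin 3) (x y) : ⟪parrottTclm j x, y⟫_ℂ = ⟪U j (J x), J y⟫_ℂ := by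
    simpa only [List.prod_ofFn_pow_single] using hdil (Pi.single j 1) x y
  have hact {j i i' : Fin 3} {c : ℂ} (hcol : (parrottA j).col i = Pi.single i' c)
      (hc : ‖c‖ = 1) :
      U j (e i) = J (EuclideanSpace.single (Sum.inr i') c) := by
    refine J.eq_apply_of_inner_eq_of_norm_le ?_ fun y => ?_
    · simp [e, (U j).norm_map_of_mem_unitary (hU j), hc]
    · rw [← hcompress, parrottTclm_single_inl hcol]
  have hneg := eq_neg_of_parrott_relations (fun j => (U j : K →+ K))
    (fun j k v => congr($(hUcomm j k) v)) e f
    (by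
      rw [← map_neg, ← PiLp.single_neg]
      exact hact (by ext r; fin_cases r <;> simp [parrottA]) (by simp))
    (hact (by ext r; fin_cases r <;> simp [parrottA]) (by simp))
    (hact (by ext r; fin_cases r <;> simp [parrottA]) (by simp))
    (hact (by ext r; fin_cases r <;> simp [parrottA]) (by simp))
    (hact (by ext r; fin_cases r <;> simp [parrottA]) (by simp))
    (hact (by ext r; fin_cases r <;> simp [parrottA]) (by simp))
  have hzero : U 2 (f 0) = 0 := by
    rwa [eq_neg_iff_add_eq_zero, ← two_smul ℂ, smul_eq_zero_iff_right two_ne_zero] at hneg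
  simpa [f, hzero] using (U 2).norm_map_of_mem_unitary (hU 2) (f 0)
end

section
/- Let X ⊆ ℂᴺ be compact, H a Hilbert space, and T: X → B(H)^d a function such that each coordinate extends analytically to a neighborhood of X and T(z) is a commuting tuple of contractions for each z ∈ X. Let K ⊆ X be a subset such that sup_X |f| = sup_K |f| for every function f analytic in a neighborhood of X. If ‖p(T(z))‖ ≤ sup_{w ∈ closed polydisc} |p(w)| for all z ∈ K and all polynomials p ∈ ℂ[z₁,…,z_d], then the same inequality holds for all z ∈ X. -/
/-- Evaluation of a polynomial `p ∈ ℂ[z₁,…,z_d]` at a (commuting) tuple of operators: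
`p(T) = ∑_m coeff(m) T₁^{m₁} ⋯ T_d^{m_d}`. -/
noncomputable def evalPolyAt {d : ℕ} {A : Type*} [Ring A] [Algebra ℂ A]
    (T : Fin d → A) (p : MvPolynomial (Fin d) ℂ) : A :=
  ∑ m ∈ p.support, MvPolynomial.coeff m p • (List.ofFn fun j => T j ^ m j).prod

/-- The supremum of `|p|` over the closed unit polydisc in `ℂ^d`. -/
noncomputable def polydiscSup {d : ℕ} (p : MvPolynomial (Fin d) ℂ) : ℝ :=
  sSup {x : ℝ | ∃ z : Fin d → ℂ, (∀ j, ‖z j‖ ≤ 1) ∧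
    x = ‖MvPolynomial.eval z p‖}

/-!
For a fixed polynomial `p`, the map `z ↦ p(T(z))` is an analytic operator-valued function on a
neighbourhood of `X`. By Hahn–Banach, `‖p(T(z))‖ = ℓ(p(T(z)))` for a norming functional `ℓ` of
norm at most one on `B(H)`, and `w ↦ ℓ(p(T(w)))` is a scalar analytic function, so its modulus
has the same supremum over `X` as over the boundary `K`, where it is bounded by `sup_𝔻ᵈ |p|`.
-/

theorem polydiscSup_nonneg {d : ℕ} (p : MvPolynomial (Fin d) ℂ) : 0 ≤ polydiscSup p :=
  Real.sSup_nonneg fun _ ⟨_, _, hx⟩ => hx ▸ norm_nonneg _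

section Analytic

variable {E A : Type*} [NormedAddCommGroup E] [NormedSpace ℂ E] [NormedRing A] [NormedAlgebra ℂ A]
  {U : Set E}

theorem AnalyticOnNhd.list_prod_ofFn {k : ℕ} {f : Fin k → E → A}
    (hf : ∀ i, AnalyticOnNhd ℂ (f i) U) :
    AnalyticOnNhd ℂ (fun w => (List.ofFn fun i => f i w).prod) U := by
  induction k with
  | zero => simpa using analyticOnNhd_const
  | succ k ih =>
    simp only [List.ofFn_succ, List.prod_cons]
    exact (hf 0).mul (ih fun i => hf i.succ)

theorem AnalyticOnNhd.evalPolyAt {d : ℕ} {T : E → Fin d → A}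
    (hT : ∀ j, AnalyticOnNhd ℂ (fun w => T w j) U) (p : MvPolynomial (Fin d) ℂ) :
    AnalyticOnNhd ℂ (fun w => evalPolyAt (T w) p) U :=
  Finset.analyticOnNhd_fun_sum _ fun m _ =>
    analyticOnNhd_const.smul (AnalyticOnNhd.list_prod_ofFn fun j => (hT j).pow (m j))

end Analytic

theorem norm_le_of_forall_mem_boundary {E G : Type*} [NormedAddCommGroup E] [NormedSpace ℂ E]
    [NormedAddCommGroup G] [NormedSpace ℂ G] {X K U : Set E} (hX : IsCompact X) (hXU : X ⊆ U)
    (hbdry : ∀ f : E → ℂ, AnalyticOnNhd ℂ f U →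
      sSup ((fun z => ‖f z‖) '' X) = sSup ((fun z => ‖f z‖) '' K))
    {F : E → G} (hF : AnalyticOnNhd ℂ F U) {c : ℝ} (hc : 0 ≤ c) (hK : ∀ w ∈ K, ‖F w‖ ≤ c)
    {z : E} (hz : z ∈ X) : ‖F z‖ ≤ c := by
  obtain ⟨ℓ, hℓ, hℓz⟩ := exists_dual_vector'' ℂ (F z)
  have hf : AnalyticOnNhd ℂ (fun w => ℓ (F w)) U := ℓ.comp_analyticOnNhd hF
  have hbdd : BddAbove ((fun w => ‖ℓ (F w)‖) '' X) :=
    (hX.image_of_continuousOn (hf.continuousOn.mono hXU).norm).bddAbove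
  calc ‖F z‖ = ‖ℓ (F z)‖ := by simp [hℓz]
    _ ≤ sSup ((fun w => ‖ℓ (F w)‖) '' X) := le_csSup hbdd ⟨z, hz, rfl⟩
    _ = sSup ((fun w => ‖ℓ (F w)‖) '' K) := hbdry _ hf
    _ ≤ c := Real.sSup_le (Set.forall_mem_image.2 fun w hw =>
        (ℓ.le_of_opNorm_le hℓ _).trans ((one_mul _).trans_le (hK w hw))) hc

theorem von_neumann_via_shilov_boundary_general
    {n d : ℕ} {H : Type*} [NormedAddCommGroup H] [InnerProductSpace ℂ H]
    (X : Set (Fin n → ℂ)) (hX : IsCompact X)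
    (T : (Fin n → ℂ) → Fin d → (H →L[ℂ] H))
    (Uo : Set (Fin n → ℂ)) (hUo : IsOpen Uo) (hXUo : X ⊆ Uo)
    (hT : ∀ j, AnalyticOnNhd ℂ (fun z => T z j) Uo)
    (K : Set (Fin n → ℂ))
    (hbdry : ∀ (V : Set (Fin n → ℂ)) (f : (Fin n → ℂ) → ℂ),
      IsOpen V → X ⊆ V → AnalyticOnNhd ℂ f V →
      sSup ((fun z => ‖f z‖) '' X) = sSup ((fun z => ‖f z‖) '' K))
    (hvN : ∀ z ∈ K, ∀ p : MvPolynomial (Fin d) ℂ,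
      ‖evalPolyAt (T z) p‖ ≤ polydiscSup p) :
    ∀ z ∈ X, ∀ p : MvPolynomial (Fin d) ℂ,
      ‖evalPolyAt (T z) p‖ ≤ polydiscSup p :=
  fun _ hz p => norm_le_of_forall_mem_boundary hX hXUo (fun f => hbdry Uo f hUo hXUo)
    (AnalyticOnNhd.evalPolyAt hT p) (polydiscSup_nonneg p) (fun w hw => hvN w hw p) hz

/-- Let `X ⊆ ℂᴺ` be compact and let `T : X → B(H)^d` be (coordinatewise)
analytic in a neighbourhood of `X`, taking values in commuting tuples of contractions.
Let `K ⊆ X` be a boundary for functions analytic in a neighbourhood of `X`, i.e.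
`sup_X |f| = sup_K |f|` for all such `f`.  If von Neumann's inequality holds for `T(z)`
for all `z ∈ K`, then it holds for all `z ∈ X`. -/
theorem von_neumann_via_shilov_boundary
    {n d : ℕ} {H : Type*} [NormedAddCommGroup H] [InnerProductSpace ℂ H] [CompleteSpace H]
    (X : Set (Fin n → ℂ)) (hX : IsCompact X)
    (T : (Fin n → ℂ) → Fin d → (H →L[ℂ] H))
    (Uo : Set (Fin n → ℂ)) (hUo : IsOpen Uo) (hXUo : X ⊆ Uo)
    (hT : ∀ j, AnalyticOnNhd ℂ (fun z => T z j) Uo)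
    (hcomm : ∀ z ∈ X, ∀ j k, T z j * T z k = T z k * T z j)
    (hcontr : ∀ z ∈ X, ∀ j, ‖T z j‖ ≤ 1)
    (K : Set (Fin n → ℂ)) (hK : K ⊆ X)
    (hbdry : ∀ (V : Set (Fin n → ℂ)) (f : (Fin n → ℂ) → ℂ),
      IsOpen V → X ⊆ V → AnalyticOnNhd ℂ f V →
      sSup ((fun z => ‖f z‖) '' X) = sSup ((fun z => ‖f z‖) '' K))
    (hvN : ∀ z ∈ K, ∀ p : MvPolynomial (Fin d) ℂ,
      ‖evalPolyAt (T z) p‖ ≤ polydiscSup p) :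
    ∀ z ∈ X, ∀ p : MvPolynomial (Fin d) ℂ,
      ‖evalPolyAt (T z) p‖ ≤ polydiscSup p :=
  von_neumann_via_shilov_boundary_general X hX T Uo hUo hXUo hT K hbdry hvN
end
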